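/- Let L > 0 and let u be a classical solution of the projected sinh-Gordon equation (C², L-periodic in x, with zero spatial mean). Then the energy E(t) = (1/2)∫₀^L [u_x(x,t)² + u_t(x,t)² − 2(cosh(u(x,t)) − 1)] dx is independent of t, i.e. E(t) = E(0) for all t ≥ 0. -/

import Mathlib

/-!
Differentiating under the integral sign, `E'(t) = ∫ (u_x u_xt + u_t u_tt - sinh u · u_t) dx`.
Substituting `u_tt = u_xx + sinh u - m(t)`, where `m(t) = (1/L) ∫ sinh u dy`, and using
`u_xt = u_tx`, the integrand becomes `∂ₓ(u_x u_t) - m(t) u_t`. The first term integrates to zero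
by periodicity; so does the second, because `∫ u_t dx` is the time derivative of `∫ u dx`, which
vanishes for `t ≥ 0`.
-/

open Real MeasureTheory

open Function Set

section Calculus

variable {E : Type*} [NormedAddCommGroup E] [NormedSpace ℝ E]

theorem hasDerivAt_intervalIntegral_of_continuous {F G : ℝ → ℝ → E} {a b : ℝ}
    (hF : Continuous (uncurry F)) (hG : Continuous (uncurry G))
    (hFG : ∀ x s, HasDerivAt (F x) (G x s) s) (t : ℝ) :
    HasDerivAt (fun s => ∫ x in a..b, F x s) (∫ x in a..b, G x t) t := by
  obtain ⟨C, hC⟩ := (isCompact_uIcc.prod (isCompact_closedBall t 1)).exists_bound_of_continuousOn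
    hG.continuousOn
  have hF_slice : ∀ s, Continuous fun x => F x s := fun s => hF.comp (.prodMk_left s)
  exact (intervalIntegral.hasDerivAt_integral_of_dominated_loc_of_deriv_le
    (F := fun s x => F x s) (F' := fun s x => G x s) (bound := fun _ => C)
    (Metric.ball_mem_nhds t one_pos) (.of_forall fun s => (hF_slice s).aestronglyMeasurable)
    ((hF_slice t).intervalIntegrable a b) (hG.comp (.prodMk_left t)).aestronglyMeasurable
    (.of_forall fun x hx s hs => hC (x, s) ⟨uIoc_subset_uIcc hx, Metric.ball_subset_closedBall hs⟩)
    intervalIntegrable_const (.of_forall fun x _ s _ => hFG x s)).2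

theorem HasDerivAt.eq_zero_of_eqOn_Ici {g : ℝ → E} {g' : E} {a t : ℝ} (hg : HasDerivAt g g' t)
    (hzero : EqOn g 0 (Ici a)) (ht : a ≤ t) : g' = 0 := by
  have hconst : HasDerivWithinAt g 0 (Ici t) t :=
    (hasDerivWithinAt_const t (Ici t) (0 : E)).congr
      (fun s hs => hzero (ht.trans hs)) (hzero ht)
  exact (uniqueDiffWithinAt_Ici t).eq_deriv _ hg.hasDerivWithinAt hconst

theorem intervalIntegral.integral_eq_zero_of_hasDerivAt_of_periodic [CompleteSpace E]
    {g g' : ℝ → E} {L : ℝ}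
    (hg : Periodic g L) (hderiv : ∀ x, HasDerivAt g (g' x) x)
    (hint : IntervalIntegrable g' volume 0 L) : ∫ x in (0:ℝ)..L, g' x = 0 := by
  rw [integral_eq_sub_of_hasDerivAt (fun x _ => hderiv x) hint, ← zero_add L, hg 0, sub_self]

noncomputable def partialX (u : ℝ → ℝ → E) (x t : ℝ) : E := deriv (fun y => u y t) x

noncomputable def partialT (u : ℝ → ℝ → E) (x t : ℝ) : E := deriv (fun s => u x s) t

theorem HasFDerivAt.hasDerivAt_comp_mk_left {f : ℝ × ℝ → E} {f' : ℝ × ℝ →L[ℝ] E} {x t : ℝ}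
    (hf : HasFDerivAt f f' (x, t)) : HasDerivAt (fun y => f (y, t)) (f' (1, 0)) x :=
  hf.comp_hasDerivAt x ((hasDerivAt_id x).prodMk (hasDerivAt_const x t))

theorem HasFDerivAt.hasDerivAt_comp_mk_right {f : ℝ × ℝ → E} {f' : ℝ × ℝ →L[ℝ] E} {x t : ℝ}
    (hf : HasFDerivAt f f' (x, t)) : HasDerivAt (fun s => f (x, s)) (f' (0, 1)) t :=
  hf.comp_hasDerivAt t ((hasDerivAt_const t x).prodMk (hasDerivAt_id t))

variable {u : ℝ → ℝ → E}

theorem hasDerivAt_partialX (hu : Differentiable ℝ (uncurry u)) (x t : ℝ) :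
    HasDerivAt (fun y => u y t) (partialX u x t) x :=
  (hu.comp (differentiable_id.prodMk (differentiable_const t)) x).hasDerivAt

theorem hasDerivAt_partialT (hu : Differentiable ℝ (uncurry u)) (x t : ℝ) :
    HasDerivAt (fun s => u x s) (partialT u x t) t :=
  (hu.comp ((differentiable_const x).prodMk differentiable_id) t).hasDerivAt

theorem partialX_eq_fderiv (hu : Differentiable ℝ (uncurry u)) (x t : ℝ) :
    partialX u x t = fderiv ℝ (uncurry u) (x, t) (1, 0) :=
  (hu (x, t)).hasFDerivAt.hasDerivAt_comp_mk_left.deriv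

theorem partialT_eq_fderiv (hu : Differentiable ℝ (uncurry u)) (x t : ℝ) :
    partialT u x t = fderiv ℝ (uncurry u) (x, t) (0, 1) :=
  (hu (x, t)).hasFDerivAt.hasDerivAt_comp_mk_right.deriv

theorem ContDiff.uncurry_partialX {m n : WithTop ℕ∞} (hu : ContDiff ℝ n (uncurry u))
    (hmn : m + 1 ≤ n) : ContDiff ℝ m (uncurry (partialX u)) := by
  have hdiff := hu.differentiable (ne_bot_of_le_ne_bot one_ne_zero (le_add_self.trans hmn))
  have : uncurry (partialX u) = fun p => fderiv ℝ (uncurry u) p (1, 0) :=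
    funext fun p => partialX_eq_fderiv hdiff p.1 p.2
  exact this ▸ (hu.fderiv_right hmn).clm_apply contDiff_const

theorem ContDiff.uncurry_partialT {m n : WithTop ℕ∞} (hu : ContDiff ℝ n (uncurry u))
    (hmn : m + 1 ≤ n) : ContDiff ℝ m (uncurry (partialT u)) := by
  have hdiff := hu.differentiable (ne_bot_of_le_ne_bot one_ne_zero (le_add_self.trans hmn))
  have : uncurry (partialT u) = fun p => fderiv ℝ (uncurry u) p (0, 1) :=
    funext fun p => partialT_eq_fderiv hdiff p.1 p.2
  exact this ▸ (hu.fderiv_right hmn).clm_apply contDiff_const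

theorem partialT_partialX (hu : ContDiff ℝ 2 (uncurry u)) :
    partialT (partialX u) = partialX (partialT u) := by
  set f := uncurry u
  have hf : Differentiable ℝ f := hu.differentiable two_ne_zero
  have hf' : Differentiable ℝ (fderiv ℝ f) :=
    (hu.fderiv_right (m := 1) le_rfl).differentiable one_ne_zero
  ext x t
  have hxt : HasDerivAt (fun s => fderiv ℝ f (x, s) (1, 0))
      (fderiv ℝ (fderiv ℝ f) (x, t) (0, 1) (1, 0)) t := by
    simpa using (hf' (x, t)).hasFDerivAt.hasDerivAt_comp_mk_right.clm_apply
      (hasDerivAt_const t ((1, 0) : ℝ × ℝ))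
  have htx : HasDerivAt (fun y => fderiv ℝ f (y, t) (0, 1))
      (fderiv ℝ (fderiv ℝ f) (x, t) (1, 0) (0, 1)) x := by
    simpa using (hf' (x, t)).hasFDerivAt.hasDerivAt_comp_mk_left.clm_apply
      (hasDerivAt_const x ((0, 1) : ℝ × ℝ))
  have hsymm := hu.contDiffAt.isSymmSndFDerivAt (x := (x, t)) (by simp) (0, 1) (1, 0)
  rw [funext₂ (partialX_eq_fderiv hf), funext₂ (partialT_eq_fderiv hf)]
  exact hxt.deriv.trans (hsymm.trans htx.deriv.symm)

theorem Function.Periodic.partialX {L : ℝ} (hper : Periodic u L) (t : ℝ) :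
    Periodic (fun x => partialX u x t) L := fun x => by
  simp only [_root_.partialX, ← deriv_comp_add_const, show ∀ y, u (y + L) = u y from hper]

theorem Function.Periodic.partialT {L : ℝ} (hper : Periodic u L) (t : ℝ) :
    Periodic (fun x => partialT u x t) L := fun x => by
  simp only [_root_.partialT, hper x]

theorem integral_partialT_eq_zero {a b t₀ t : ℝ}
    (hu : ContDiff ℝ 1 (uncurry u)) (hmean : ∀ t, t₀ ≤ t → ∫ x in a..b, u x t = 0)
    (ht : t₀ ≤ t) : ∫ x in a..b, partialT u x t = 0 :=
  (hasDerivAt_intervalIntegral_of_continuous hu.continuous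
      (hu.uncurry_partialT (m := 0) le_rfl).continuous
      (hasDerivAt_partialT (hu.differentiable one_ne_zero)) t).eq_zero_of_eqOn_Ici
    hmean ht

end Calculus

section Energy

variable {L : ℝ} {u : ℝ → ℝ → ℝ}

noncomputable def sinhGordonEnergy (L : ℝ) (u : ℝ → ℝ → ℝ) (t : ℝ) : ℝ :=
  (1 / 2) * ∫ x in (0:ℝ)..L, (partialX u x t ^ 2 + partialT u x t ^ 2 - 2 * (cosh (u x t) - 1))

theorem hasDerivAt_sinhGordonEnergy (hu : ContDiff ℝ 2 (uncurry u)) (t : ℝ) :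
    HasDerivAt (sinhGordonEnergy L u)
      (∫ x in (0:ℝ)..L, (partialX u x t * partialT (partialX u) x t
        + partialT u x t * partialT (partialT u) x t - sinh (u x t) * partialT u x t)) t := by
  have hux := hu.uncurry_partialX (m := 1) le_rfl
  have hut := hu.uncurry_partialT (m := 1) le_rfl
  have hc : Continuous fun p : ℝ × ℝ => u p.1 p.2 := hu.continuous
  have hcx : Continuous fun p : ℝ × ℝ => partialX u p.1 p.2 := hux.continuous
  have hct : Continuous fun p : ℝ × ℝ => partialT u p.1 p.2 := hut.continuous
  have hcxt : Continuous fun p : ℝ × ℝ => partialT (partialX u) p.1 p.2 :=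
    (hux.uncurry_partialT (m := 0) le_rfl).continuous
  have hctt : Continuous fun p : ℝ × ℝ => partialT (partialT u) p.1 p.2 :=
    (hut.uncurry_partialT (m := 0) le_rfl).continuous
  have hdensity : ∀ x s, HasDerivAt
      (fun s => partialX u x s ^ 2 + partialT u x s ^ 2 - 2 * (cosh (u x s) - 1))
      (2 * (partialX u x s * partialT (partialX u) x s
        + partialT u x s * partialT (partialT u) x s - sinh (u x s) * partialT u x s)) s := by
    intro x s
    refine ((((hasDerivAt_partialT (hux.differentiable one_ne_zero) x s).fun_pow 2).fun_add
      ((hasDerivAt_partialT (hut.differentiable one_ne_zero) x s).fun_pow 2)).fun_sub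
      (((hasDerivAt_partialT (hu.differentiable two_ne_zero) x s).cosh.sub_const 1).const_mul 2)
      ).congr_deriv ?_
    push_cast
    ring
  have := (hasDerivAt_intervalIntegral_of_continuous (a := 0) (b := L)
    (by simp only [uncurry_def]; fun_prop) (by simp only [uncurry_def]; fun_prop)
    hdensity t).const_mul (1 / 2)
  rw [intervalIntegral.integral_const_mul, ← mul_assoc, one_div_mul_cancel two_ne_zero,
    one_mul] at this
  exact this

theorem hasDerivAt_sinhGordonEnergy_eq_zero (hu : ContDiff ℝ 2 (uncurry u)) (hper : Periodic u L)
    {t : ℝ} (hpde : ∀ x, partialT (partialT u) x t - partialX (partialX u) x t - sinh (u x t)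
      + (1 / L) * ∫ y in (0:ℝ)..L, sinh (u y t) = 0)
    (hmean : ∫ x in (0:ℝ)..L, partialT u x t = 0) :
    HasDerivAt (sinhGordonEnergy L u) 0 t := by
  set m := (1 / L) * ∫ y in (0:ℝ)..L, sinh (u y t)
  have hux := hu.uncurry_partialX (m := 1) le_rfl
  have hut := hu.uncurry_partialT (m := 1) le_rfl
  have hcx : Continuous fun p : ℝ × ℝ => partialX u p.1 p.2 := hux.continuous
  have hct : Continuous fun p : ℝ × ℝ => partialT u p.1 p.2 := hut.continuous
  have hcxx : Continuous fun p : ℝ × ℝ => partialX (partialX u) p.1 p.2 :=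
    (hux.uncurry_partialX (m := 0) le_rfl).continuous
  have hctx : Continuous fun p : ℝ × ℝ => partialX (partialT u) p.1 p.2 :=
    (hut.uncurry_partialX (m := 0) le_rfl).continuous
  have hflux : ∫ x in (0:ℝ)..L, (partialX (partialX u) x t * partialT u x t
      + partialX u x t * partialX (partialT u) x t) = 0 :=
    intervalIntegral.integral_eq_zero_of_hasDerivAt_of_periodic
      ((hper.partialX t).mul (hper.partialT t))
      (fun x => (hasDerivAt_partialX (hux.differentiable one_ne_zero) x t).mul
        (hasDerivAt_partialX (hut.differentiable one_ne_zero) x t))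
      (Continuous.intervalIntegrable (by fun_prop) 0 L)
  have hrate : ∀ x, partialX u x t * partialT (partialX u) x t
      + partialT u x t * partialT (partialT u) x t - sinh (u x t) * partialT u x t
      = (partialX (partialX u) x t * partialT u x t + partialX u x t * partialX (partialT u) x t)
        - m * partialT u x t := by
    intro x
    rw [partialT_partialX hu, show partialT (partialT u) x t
      = partialX (partialX u) x t + sinh (u x t) - m by linarith [hpde x]]
    ring
  convert hasDerivAt_sinhGordonEnergy hu t using 1
  rw [intervalIntegral.integral_congr fun x _ => hrate x, intervalIntegral.integral_sub
    (Continuous.intervalIntegrable (by fun_prop) 0 L)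
    (Continuous.intervalIntegrable (by fun_prop) 0 L),
    intervalIntegral.integral_const_mul, hflux, hmean, mul_zero, sub_zero]

end Energy

theorem sinhGordon_energy_conservation_general
    (L : ℝ)
    (u : ℝ → ℝ → ℝ)
    (hreg : ContDiff ℝ 2 (Function.uncurry u))
    (hper : ∀ x t : ℝ, u (x + L) t = u x t)
    (hmean : ∀ t : ℝ, 0 ≤ t → (∫ x in (0:ℝ)..L, u x t) = 0)
    (hpde : ∀ x t : ℝ, 0 ≤ t →
      deriv (deriv (fun s => u x s)) t
        - deriv (deriv (fun y => u y t)) x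
        - Real.sinh (u x t)
        + (1 / L) * ∫ y in (0:ℝ)..L, Real.sinh (u y t) = 0) :
    ∀ t : ℝ, 0 ≤ t →
      (1/2) * (∫ x in (0:ℝ)..L,
        ((deriv (fun y => u y t) x)^2 + (deriv (fun s => u x s) t)^2
          - 2 * (Real.cosh (u x t) - 1)))
      = (1/2) * (∫ x in (0:ℝ)..L,
        ((deriv (fun y => u y 0) x)^2 + (deriv (fun s => u x s) 0)^2
          - 2 * (Real.cosh (u x 0) - 1))) := by
  intro t ht
  have hderiv : ∀ s, 0 ≤ s → HasDerivAt (sinhGordonEnergy L u) 0 s := fun s hs =>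
    hasDerivAt_sinhGordonEnergy_eq_zero hreg (fun x => funext (hper x)) (hpde · s hs)
      (integral_partialT_eq_zero (hreg.of_le one_le_two) hmean hs)
  exact constant_of_has_deriv_right_zero
    (fun s hs => (hderiv s hs.1).continuousAt.continuousWithinAt)
    (fun s hs => (hderiv s hs.1).hasDerivWithinAt) t ⟨ht, le_rfl⟩

/-- Conservation of energy for classical solutions of the projected
sinh-Gordon equation. -/
theorem sinhGordon_energy_conservation
    (L : ℝ) (hL : 0 < L)
    (u : ℝ → ℝ → ℝ)
    (hreg : ContDiff ℝ 2 (Function.uncurry u))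
    (hper : ∀ x t : ℝ, u (x + L) t = u x t)
    (hmean : ∀ t : ℝ, 0 ≤ t → (∫ x in (0:ℝ)..L, u x t) = 0)
    (hpde : ∀ x t : ℝ, 0 ≤ t →
      deriv (deriv (fun s => u x s)) t
        - deriv (deriv (fun y => u y t)) x
        - Real.sinh (u x t)
        + (1 / L) * ∫ y in (0:ℝ)..L, Real.sinh (u y t) = 0) :
    ∀ t : ℝ, 0 ≤ t →
      (1/2) * (∫ x in (0:ℝ)..L,
        ((deriv (fun y => u y t) x)^2 + (deriv (fun s => u x s) t)^2
          - 2 * (Real.cosh (u x t) - 1)))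
      = (1/2) * (∫ x in (0:ℝ)..L,
        ((deriv (fun y => u y 0) x)^2 + (deriv (fun s => u x s) 0)^2
          - 2 * (Real.cosh (u x 0) - 1))) :=
  sinhGordon_energy_conservation_general L u hreg hper hmean hpde
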